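/- Let b > 0, and let p_Y : ℝ → ℝ be a probability density that is piecewise constant: p_Y(y) = a_L for y ∈ [x-b, x_{j+1}-b), p_Y(y) = a_M for y ∈ [x_{j+1}-b, x_j+b), p_Y(y) = a_R for y ∈ [x_j+b, x+b], with a_L, a_M, a_R > 0 and x ∈ [x_j, x_{j+1}], x_{j+1} - x_j < 2b. Then i(x) := -(1/(2b)) ∫_{x-b}^{x+b} log(2b · p_Y(y)) dy is an affine function of x on [x_j, x_{j+1}] with slope (1/(2b)) log(a_L / a_R). -/

import Mathlib

open MeasureTheory

lemma stmt12_aux (f : ℝ → ℝ) (c a b' : ℝ) (hab : a ≤ b')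
    (h : f =ᵐ[volume.restrict (Set.Ioc a b')] fun _ => c) :
    IntervalIntegrable f volume a b' ∧
    ∫ y in a..b', f y = (b' - a) * c := by
  constructor
  · rw [intervalIntegrable_iff_integrableOn_Ioc_of_le hab]
    exact ((integrableOn_const measure_Ioc_lt_top.ne)).congr h.symm
  · rw [intervalIntegral.integral_of_le hab, integral_congr_ae h,
      setIntegral_const, Real.volume_real_Ioc_of_le hab, smul_eq_mul]

lemma stmt12_ne (c : ℝ) : ∀ᵐ y : ℝ, y ≠ c := by
  rw [ae_iff]
  simp

theorem stmt12 (b xj xj1 aL aM aR : ℝ) (hb : 0 < b) (hjj : xj < xj1)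
    (hwidth : xj1 - xj < 2 * b) (haL : 0 < aL) (haM : 0 < aM) (haR : 0 < aR)
    (pY : ℝ → ℝ)
    (hL : ∀ y ∈ Set.Ico (xj - b) (xj1 - b), pY y = aL)
    (hM : ∀ y ∈ Set.Ico (xj1 - b) (xj + b), pY y = aM)
    (hR : ∀ y ∈ Set.Icc (xj + b) (xj1 + b), pY y = aR)
    (i : ℝ → ℝ)
    (hi : ∀ x, i x = -(1 / (2 * b)) * ∫ y in (x - b)..(x + b), Real.log (2 * b * pY y)) :
    ∃ D : ℝ, ∀ x ∈ Set.Icc xj xj1,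
      i x = (1 / (2 * b)) * Real.log (aL / aR) * x + D := by
  set cL := Real.log (2 * b * aL) with hcL
  set cM := Real.log (2 * b * aM) with hcM
  set cR := Real.log (2 * b * aR) with hcR
  refine ⟨-(1 / (2 * b)) * (xj1 * cL + (xj - xj1 + 2 * b) * cM - xj * cR), ?_⟩
  rintro x ⟨hx1, hx2⟩
  rw [hi]
  set f : ℝ → ℝ := fun y => Real.log (2 * b * pY y) with hf
  have e1 : f =ᵐ[volume.restrict (Set.Ioc (x - b) (xj1 - b))] fun _ => cL := by
    refine (ae_restrict_iff' measurableSet_Ioc).2 ?_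
    filter_upwards [stmt12_ne (xj1 - b)] with y hy hmem
    simp only [hf]
    rw [hL y ⟨by linarith [hmem.1], lt_of_le_of_ne hmem.2 hy⟩]
  have e2 : f =ᵐ[volume.restrict (Set.Ioc (xj1 - b) (xj + b))] fun _ => cM := by
    refine (ae_restrict_iff' measurableSet_Ioc).2 ?_
    filter_upwards [stmt12_ne (xj + b)] with y hy hmem
    simp only [hf]
    rw [hM y ⟨hmem.1.le, lt_of_le_of_ne hmem.2 hy⟩]
  have e3 : f =ᵐ[volume.restrict (Set.Ioc (xj + b) (x + b))] fun _ => cR := by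
    refine (ae_restrict_iff' measurableSet_Ioc).2 ?_
    filter_upwards with y hmem
    simp only [hf]
    rw [hR y ⟨hmem.1.le, by linarith [hmem.2]⟩]
  obtain ⟨int1, i1⟩ := stmt12_aux f cL (x - b) (xj1 - b) (by linarith) e1
  obtain ⟨int2, i2⟩ := stmt12_aux f cM (xj1 - b) (xj + b) (by linarith) e2
  obtain ⟨int3, i3⟩ := stmt12_aux f cR (xj + b) (x + b) (by linarith) e3
  have key : ∫ y in (x - b)..(x + b), f y
      = (xj1 - x) * cL + (xj - xj1 + 2 * b) * cM + (x - xj) * cR := by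
    rw [← intervalIntegral.integral_add_adjacent_intervals (int1.trans int2) int3,
      ← intervalIntegral.integral_add_adjacent_intervals int1 int2, i1, i2, i3]
    ring
  rw [key]
  have hlog : Real.log (aL / aR) = cL - cR := by
    rw [hcL, hcR, Real.log_div haL.ne' haR.ne',
      Real.log_mul (by positivity) haL.ne', Real.log_mul (by positivity) haR.ne']
    ring
  rw [hlog]
  ring
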